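/- Suppose R₁ = f₁ + f₂ where f₁, f₂ ∈ P_{3,6} (nonnegative ternary sextics), R₁ is the first Robinson form, and the nine points X = {−1,0,1}² × {1} are all zeros of f₂. Then f₁ is not a sum of squares. -/

import Mathlib

/-!
If `f₁ = ∑ gᵢ²` is a sextic form, comparing top homogeneous components shows that every `gᵢ` has
degree at most `3`. On the grid `X = {−1,0,1}² × {1}` we have `f₂ = 0`, so `f₁ = R₁` there, and
`R₁(x,y,1) = (1 − x²)(1 − y²)` vanishes at the eight points of `X` other than `(0,0,1)`; hence so
does every `gᵢ`. By the Cayley–Bacharach relation a cubic vanishing at these eight points also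
vanishes at `(0,0,1)`, so `f₁(0,0,1) = 0`, whereas `f₁(0,0,1) = R₁(0,0,1) = 1`.
-/

open MvPolynomial

/-- The first Robinson form. -/
noncomputable def Robinson1 : MvPolynomial (Fin 3) ℝ :=
  X 0 ^ 6 + X 1 ^ 6 + X 2 ^ 6
    - (X 0 ^ 4 * X 1 ^ 2 + X 0 ^ 4 * X 2 ^ 2 + X 1 ^ 4 * X 0 ^ 2 + X 1 ^ 4 * X 2 ^ 2
        + X 2 ^ 4 * X 0 ^ 2 + X 2 ^ 4 * X 1 ^ 2)
    + 3 * (X 0 ^ 2 * X 1 ^ 2 * X 2 ^ 2)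

namespace MvPolynomial

variable {σ R : Type*}

section CommSemiring

variable [CommSemiring R]

/-- `p (t • x)` as a polynomial in `t`. -/
noncomputable def restrictRay (x : σ → R) : MvPolynomial σ R →ₐ[R] Polynomial R :=
  aeval fun i => Polynomial.C (x i) * Polynomial.X

theorem restrictRay_monomial (x : σ → R) (d : σ →₀ ℕ) (c : R) :
    restrictRay x (monomial d c)
      = Polynomial.C (eval x (monomial d c)) * Polynomial.X ^ d.degree := by
  rw [restrictRay, aeval_monomial, eval_monomial, Finsupp.prod, Finsupp.prod, Finsupp.degree_apply]
  simp_rw [mul_pow, Finset.prod_mul_distrib, Finset.prod_pow_eq_pow_sum, ← Polynomial.C_pow,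
    ← map_prod, Polynomial.algebraMap_eq, ← mul_assoc, ← map_mul]

theorem coeff_restrictRay (x : σ → R) (p : MvPolynomial σ R) (n : ℕ) :
    (restrictRay x p).coeff n = eval x (homogeneousComponent n p) := by
  induction p using MvPolynomial.induction_on' with
  | add p q hp hq => simp only [map_add, Polynomial.coeff_add, hp, hq]
  | monomial d c =>
    rw [restrictRay_monomial, Polynomial.coeff_C_mul_X_pow, homogeneousComponent_of_mem
      (isHomogeneous_monomial c rfl : monomial d c ∈ homogeneousSubmodule σ R d.degree)]
    split_ifs <;> simp

theorem natDegree_restrictRay_le (x : σ → R) (p : MvPolynomial σ R) :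
    (restrictRay x p).natDegree ≤ p.totalDegree :=
  Polynomial.natDegree_le_iff_coeff_eq_zero.mpr fun _ hn => by
    rw [coeff_restrictRay, homogeneousComponent_eq_zero _ _ hn, map_zero]

theorem totalDegree_lt_of_homogeneousComponent_eq_zero {p : MvPolynomial σ R} {n : ℕ}
    (hn : 0 < n) (hp : p.totalDegree ≤ n) (h : homogeneousComponent n p = 0) :
    p.totalDegree < n := by
  refine (Finset.sup_lt_iff hn).mpr fun m hm => (hp.trans' (le_totalDegree hm)).lt_of_ne ?_
  intro hmn
  have hcoeff := congrArg (coeff m) h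
  rw [coeff_homogeneousComponent, if_pos (by simpa [Finsupp.degree_apply, Finsupp.sum] using hmn)]
    at hcoeff
  exact mem_support_iff.mp hm hcoeff

end CommSemiring

section OrderedRing

variable [CommRing R] [LinearOrder R] [IsStrictOrderedRing R] {ι : Type*} [Fintype ι]

/-- The `t ^ (2 * D)` coefficient of `∑ gᵢ(t • x)²` is `∑ (gᵢ)_D(x)²`, a sum of squares. -/
theorem homogeneousComponent_eq_zero_of_sum_sq {f : MvPolynomial σ R} {g : ι → MvPolynomial σ R}
    (hfg : f = ∑ i, g i ^ 2) {D : ℕ} (hg : ∀ i, (g i).totalDegree ≤ D)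
    (hf : f.totalDegree < 2 * D) (i : ι) : homogeneousComponent D (g i) = 0 := by
  refine funext fun x => ?_
  have hsq : ∑ j, eval x (homogeneousComponent D (g j)) ^ 2 = 0 :=
    calc ∑ j, eval x (homogeneousComponent D (g j)) ^ 2
        = (restrictRay x f).coeff (2 * D) := by
          simp only [hfg, map_sum, map_pow, Polynomial.finsetSum_coeff, ← coeff_restrictRay,
            Polynomial.coeff_pow_of_natDegree_le ((natDegree_restrictRay_le x _).trans (hg _))]
      _ = 0 := by rw [coeff_restrictRay, homogeneousComponent_eq_zero _ _ hf, map_zero]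
  simp only [sq, Finset.sum_mul_self_eq_zero_iff] at hsq
  simpa using hsq i (Finset.mem_univ i)

theorem totalDegree_le_of_sum_sq {f : MvPolynomial σ R} {g : ι → MvPolynomial σ R}
    (hfg : f = ∑ i, g i ^ 2) {d : ℕ} (hf : f.totalDegree ≤ 2 * d) (i : ι) :
    (g i).totalDegree ≤ d := by
  set D := Finset.univ.sup fun j => (g j).totalDegree
  have hgD (j : ι) : (g j).totalDegree ≤ D :=
    Finset.le_sup (f := fun j => (g j).totalDegree) (Finset.mem_univ j)
  by_contra! hi
  have hdD : d < D := hi.trans_le (hgD i)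
  obtain ⟨j, -, hj⟩ := Finset.exists_mem_eq_sup Finset.univ ⟨i, Finset.mem_univ i⟩
    fun j => (g j).totalDegree
  exact (totalDegree_lt_of_homogeneousComponent_eq_zero (d.zero_le.trans_lt hdD) (hgD j)
    (homogeneousComponent_eq_zero_of_sum_sq hfg hgD (by omega) j)).ne hj.symm

end OrderedRing

end MvPolynomial

theorem one_sub_two_mul_zero_pow_add_neg_one_pow {R : Type*} [Ring R] {a : ℕ} (ha : a ≤ 1) :
    1 - 2 * (0 : R) ^ a + (-1) ^ a = 0 := by
  interval_cases a <;> norm_num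

/-- The difference of the two sides is the product of the second differences
`h(1) − 2 h(0) + h(−1)` in `x` and in `y`; on a monomial `xᵃ yᵇ` with `a + b ≤ 3` one factor
vanishes because `a ≤ 1` or `b ≤ 1`. -/
theorem cayleyBacharach_grid {R : Type*} [CommRing R] (p : MvPolynomial (Fin 3) R)
    (hp : p.totalDegree ≤ 3) :
    eval ![1, 1, 1] p + eval ![1, -1, 1] p + eval ![-1, 1, 1] p + eval ![-1, -1, 1] p
      + 4 * eval ![0, 0, 1] p
    = 2 * (eval ![1, 0, 1] p + eval ![-1, 0, 1] p + eval ![0, 1, 1] p + eval ![0, -1, 1] p) := by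
  rw [← sub_eq_zero]
  conv_lhs => rw [p.as_sum]
  simp only [map_sum, Finset.mul_sum, ← Finset.sum_add_distrib, ← Finset.sum_sub_distrib]
  refine Finset.sum_eq_zero fun d hd => ?_
  have hd3 : d 0 + d 1 ≤ 3 := by
    have := le_totalDegree hd
    rw [Finsupp.sum_fintype _ _ fun _ => rfl, Fin.sum_univ_three] at this
    omega
  simp only [eval_monomial, Finsupp.prod_pow, Fin.prod_univ_three, Matrix.cons_val_zero,
    Matrix.cons_val_one, Matrix.cons_val_two, Matrix.head_cons, Matrix.tail_cons, one_pow]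
  rcases le_or_gt (d 0) 1 with h0 | h0
  · linear_combination (coeff d p * (1 - 2 * 0 ^ d 1 + (-1) ^ d 1)) *
      one_sub_two_mul_zero_pow_add_neg_one_pow (R := R) h0
  · linear_combination (coeff d p * (1 - 2 * 0 ^ d 0 + (-1) ^ d 0)) *
      one_sub_two_mul_zero_pow_add_neg_one_pow (R := R) (a := d 1) (by omega)

theorem eval_center_eq_zero_of_totalDegree_le_three {R : Type*} [CommRing R] [NoZeroDivisors R]
    [CharZero R] {p : MvPolynomial (Fin 3) R} (hp : p.totalDegree ≤ 3)
    (hp0 : ∀ x y : R, (x = -1 ∨ x = 0 ∨ x = 1) → (y = -1 ∨ y = 0 ∨ y = 1) → ¬(x = 0 ∧ y = 0) →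
      eval ![x, y, 1] p = 0) :
    eval ![0, 0, 1] p = 0 := by
  have h := cayleyBacharach_grid p hp
  simp (disch := norm_num) only [hp0] at h
  simpa using h

theorem eval_robinson1_grid {x y : ℝ} (hx : x = -1 ∨ x = 0 ∨ x = 1)
    (hy : y = -1 ∨ y = 0 ∨ y = 1) :
    eval ![x, y, 1] Robinson1 = (1 - x ^ 2) * (1 - y ^ 2) := by
  rcases hx with rfl | rfl | rfl <;> rcases hy with rfl | rfl | rfl <;>
    norm_num [Robinson1, Matrix.cons_val_two]

theorem robinson1_summand_not_sos_general (f₁ f₂ : MvPolynomial (Fin 3) ℝ)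
    (hf₁hom : f₁.IsHomogeneous 6)
    (hsum : Robinson1 = f₁ + f₂)
    (hzeros : ∀ v : Fin 3 → ℝ,
      (v 0 = -1 ∨ v 0 = 0 ∨ v 0 = 1) → (v 1 = -1 ∨ v 1 = 0 ∨ v 1 = 1) → v 2 = 1 →
        eval v f₂ = 0) :
    ¬ ∃ (k : ℕ) (g : Fin k → MvPolynomial (Fin 3) ℝ), f₁ = ∑ i, (g i) ^ 2 := by
  rintro ⟨k, g, rfl⟩
  have hgrid : ∀ x y : ℝ, (x = -1 ∨ x = 0 ∨ x = 1) → (y = -1 ∨ y = 0 ∨ y = 1) →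
      ∑ i, eval ![x, y, 1] (g i) * eval ![x, y, 1] (g i) = (1 - x ^ 2) * (1 - y ^ 2) := by
    intro x y hx hy
    have h := congrArg (eval ![x, y, 1]) hsum
    rw [map_add, hzeros _ hx hy rfl, eval_robinson1_grid hx hy] at h
    simpa [sq] using h.symm
  have hdeg : ∀ i, (g i).totalDegree ≤ 3 := totalDegree_le_of_sum_sq rfl hf₁hom.totalDegree_le
  have hcenter (i : Fin k) : eval ![0, 0, 1] (g i) = 0 := by
    refine eval_center_eq_zero_of_totalDegree_le_three (hdeg i) fun x y hx hy hxy => ?_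
    have hR : (1 - x ^ 2) * (1 - y ^ 2) = 0 := by
      rcases hx with rfl | rfl | rfl <;> rcases hy with rfl | rfl | rfl <;>
        first | exact absurd ⟨rfl, rfl⟩ hxy | norm_num
    have h := hgrid x y hx hy
    rw [hR, Finset.sum_mul_self_eq_zero_iff] at h
    exact h i (Finset.mem_univ i)
  simpa [hcenter] using hgrid 0 0

/-- If `R₁ = f₁ + f₂` with `f₁, f₂` nonnegative ternary sextic forms and `f₂`
vanishes on all nine points of `{−1,0,1}² × {1}`, then `f₁` is not a sum of squares. -/
theorem robinson1_summand_not_sos (f₁ f₂ : MvPolynomial (Fin 3) ℝ)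
    (hf₁hom : f₁.IsHomogeneous 6) (hf₂hom : f₂.IsHomogeneous 6)
    (hf₁ : ∀ x : Fin 3 → ℝ, 0 ≤ eval x f₁) (hf₂ : ∀ x : Fin 3 → ℝ, 0 ≤ eval x f₂)
    (hsum : Robinson1 = f₁ + f₂)
    (hzeros : ∀ v : Fin 3 → ℝ,
      (v 0 = -1 ∨ v 0 = 0 ∨ v 0 = 1) → (v 1 = -1 ∨ v 1 = 0 ∨ v 1 = 1) → v 2 = 1 →
        eval v f₂ = 0) :
    ¬ ∃ (k : ℕ) (g : Fin k → MvPolynomial (Fin 3) ℝ), f₁ = ∑ i, (g i) ^ 2 :=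
  robinson1_summand_not_sos_general f₁ f₂ hf₁hom hsum hzeros
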